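/- arXiv:2506.06663 — 2 statements merged into one kernel-verified Lean document; each statement's English description precedes it below -/
import Mathlib

section
/- Let m be a positive integer and b, c nonnegative integers with b ≠ c. Then ∑_{k=1}^{m} ψ₀(k+b)/(k+c)² = ∑_{k=1}^{m} ψ₁(k+c)/(k+b) + (1/(c-b)²)·(ψ₀(c+m+1) - ψ₀(c+1) - ψ₀(b+m+1) + ψ₀(b+1)) + (1/(c-b))·(ψ₁(c+1) - ψ₁(c+m+1)) - ψ₁(c+m+1)·ψ₀(b+m+1) + ψ₁(c+1)·ψ₀(b+1). -/
open Finset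

/-- Digamma function at a positive integer argument: `ψ₀ l = -γ + ∑_{i=1}^{l-1} 1/i`. -/
noncomputable def ψ₀ (l : ℕ) : ℝ :=
  -Real.eulerMascheroniConstant + ∑ i ∈ Finset.range (l - 1), (1 : ℝ) / (i + 1)

/-- Trigamma function at a positive integer argument: `ψ₁ l = π²/6 - ∑_{i=1}^{l-1} 1/i²`. -/
noncomputable def ψ₁ (l : ℕ) : ℝ :=
  Real.pi ^ 2 / 6 - ∑ i ∈ Finset.range (l - 1), (1 : ℝ) / (i + 1) ^ 2

/-- Tetragamma function at a positive integer argument: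
`ψ₂ l = -2ζ(3) + 2∑_{i=1}^{l-1} 1/i³`, where `ζ(3) = ∑_{i=1}^∞ 1/i³`. -/
noncomputable def ψ₂ (l : ℕ) : ℝ :=
  -2 * (∑' i : ℕ, (1 : ℝ) / (i + 1) ^ 3) +
    2 * ∑ i ∈ Finset.range (l - 1), (1 : ℝ) / (i + 1) ^ 3

/-! Induction on `m`. Passing from `m` to `m + 1`, with `x = c + m + 1` and `y = b + m + 1`, the new
summand `ψ₀(y)/x²` on the left is matched on the right by the change of `-ψ₁ψ₀`, using
`ψ₀(y+1) = ψ₀(y) + 1/y` and `ψ₁(x+1) = ψ₁(x) - 1/x²`; what remains is the partial fraction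
decomposition of `1/(x²y)` in terms of `x - y = c - b`. -/

-- Also true at `l = 0`: `0 - 1 = 0` in `ℕ` and `1/0 = 0`.
lemma ψ₀_add_one (l : ℕ) : ψ₀ (l + 1) = ψ₀ l + 1 / l := by
  cases l <;> simp [ψ₀, sum_range_succ, add_assoc]

lemma ψ₁_add_one (l : ℕ) : ψ₁ (l + 1) = ψ₁ l - 1 / (l : ℝ) ^ 2 := by
  cases l <;> simp [ψ₁, sum_range_succ, sub_sub]

lemma inv_sq_mul_inv_eq_partial_fractions {K : Type*} [Field K] {x y : K}
    (hx : x ≠ 0) (hy : y ≠ 0) (hxy : x ≠ y) :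
    (x ^ 2 * y)⁻¹ = ((x - y) ^ 2)⁻¹ * (y⁻¹ - x⁻¹) - ((x - y) * x ^ 2)⁻¹ := by
  have hd : x - y ≠ 0 := sub_ne_zero.mpr hxy
  field_simp

theorem stmt4_general (m b c : ℕ) (hbc : b ≠ c) :
    ∑ k ∈ Finset.Icc 1 m, ψ₀ (k + b) / ((k : ℝ) + c) ^ 2 =
      ∑ k ∈ Finset.Icc 1 m, ψ₁ (k + c) / ((k : ℝ) + b) +
        (1 / ((c : ℝ) - b) ^ 2) *
          (ψ₀ (c + m + 1) - ψ₀ (c + 1) - ψ₀ (b + m + 1) + ψ₀ (b + 1)) +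
        (1 / ((c : ℝ) - b)) * (ψ₁ (c + 1) - ψ₁ (c + m + 1)) -
        ψ₁ (c + m + 1) * ψ₀ (b + m + 1) + ψ₁ (c + 1) * ψ₀ (b + 1) := by
  induction m with
  | zero => simp
  | succ m ih =>
    rw [sum_Icc_succ_top (by omega), sum_Icc_succ_top (by omega), ih,
      show m + 1 + b = b + m + 1 by omega, show m + 1 + c = c + m + 1 by omega,
      ← add_assoc c, ← add_assoc b, ψ₀_add_one (c + m + 1), ψ₀_add_one (b + m + 1),
      ψ₁_add_one (c + m + 1)]
    have hcb : (c : ℝ) + m + 1 ≠ b + m + 1 := by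
      exact_mod_cast (show c + m + 1 ≠ b + m + 1 by omega)
    have partial_fractions := inv_sq_mul_inv_eq_partial_fractions (by positivity) (by positivity) hcb
    rw [show (c : ℝ) + m + 1 - (b + m + 1) = c - b by ring] at partial_fractions
    push_cast
    simp only [one_div, mul_inv] at partial_fractions ⊢
    linear_combination -partial_fractions

theorem stmt4 (m b c : ℕ) (hm : 0 < m) (hbc : b ≠ c) :
    ∑ k ∈ Finset.Icc 1 m, ψ₀ (k + b) / ((k : ℝ) + c) ^ 2 =
      ∑ k ∈ Finset.Icc 1 m, ψ₁ (k + c) / ((k : ℝ) + b) +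
        (1 / ((c : ℝ) - b) ^ 2) *
          (ψ₀ (c + m + 1) - ψ₀ (c + 1) - ψ₀ (b + m + 1) + ψ₀ (b + 1)) +
        (1 / ((c : ℝ) - b)) * (ψ₁ (c + 1) - ψ₁ (c + m + 1)) -
        ψ₁ (c + m + 1) * ψ₀ (b + m + 1) + ψ₁ (c + 1) * ψ₀ (b + 1) :=
  stmt4_general m b c hbc
end

section
/- Let m be a positive integer and a an integer with a > m. Then ∑_{k=1}^{m} ψ₀(k)/(a+1-k)² = ∑_{k=1}^{m} ψ₁(k+a-m)/k + (1/(a-m)²)·(-ψ₀(a-m+1) + ψ₀(a+1) - ψ₀(m+1) + ψ₀(1)) - ψ₁(a+1)·ψ₀(m+1) + ψ₀(a+1)·(ψ₁(a-m+1) - ψ₁(a+1)) + (1/(a-m))·(ψ₁(a-m+1) - ψ₁(a+1)) + ψ₀(a-m+1)·(ψ₁(a+1) - ψ₁(a-m+1)) + ψ₀(1)·ψ₁(a-m+1) + (1/2)ψ₂(a-m+1) - (1/2)ψ₂(a+1). -/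
open Finset

/-!
Put `a = m + n` and write `ψ₀, ψ₁, ψ₂` at `l + 1` through the generalized harmonic numbers
`H⁽ʳ⁾_l = ∑_{1 ≤ i ≤ l} 1/iʳ`. The claim becomes an identity between finite sums of harmonic numbers,
proved by induction on `m` for fixed `n`. The increment of the left-hand side is
`∑_{j<m} 1/((m-j)(n+j+1)²)`, and since the two factors add up to `m+n+1`, partial fractions turn it
into differences of harmonic numbers.
-/

noncomputable def genHarmonic (r l : ℕ) : ℝ :=
  ∑ i ∈ range l, 1 / ((i : ℝ) + 1) ^ r

@[simp]
lemma genHarmonic_zero (r : ℕ) : genHarmonic r 0 = 0 := by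
  simp [genHarmonic]

lemma genHarmonic_succ (r l : ℕ) :
    genHarmonic r (l + 1) = genHarmonic r l + 1 / ((l : ℝ) + 1) ^ r := by
  rw [genHarmonic, genHarmonic, sum_range_succ]

lemma sum_range_one_div_add_pow (r n m : ℕ) :
    ∑ j ∈ range m, 1 / ((n : ℝ) + j + 1) ^ r = genHarmonic r (n + m) - genHarmonic r n := by
  rw [genHarmonic, genHarmonic, sum_range_add, add_sub_cancel_left]
  push_cast
  rfl

lemma cast_sub_one_sub_add_one {m j : ℕ} (hj : j < m) : ((m - 1 - j : ℕ) : ℝ) + 1 = m - j := by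
  rw [Nat.cast_sub (by omega), Nat.cast_sub (by omega)]
  ring

lemma genHarmonic_one_eq_sum_range_one_div_sub (m : ℕ) :
    genHarmonic 1 m = ∑ j ∈ range m, 1 / ((m : ℝ) - j) := by
  rw [genHarmonic, ← sum_range_reflect _ m]
  refine sum_congr rfl fun j hj => ?_
  rw [pow_one, cast_sub_one_sub_add_one (mem_range.mp hj)]

lemma one_div_mul_sq_eq {x y : ℝ} (hx : x ≠ 0) (hy : y ≠ 0) (hxy : x + y ≠ 0) :
    1 / (x * y ^ 2) = 1 / (x + y) ^ 2 * (1 / x + 1 / y) + 1 / (x + y) * (1 / y ^ 2) := by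
  field_simp
  ring

lemma sum_range_one_div_sub_mul_sq (m n : ℕ) :
    ∑ j ∈ range m, 1 / (((m : ℝ) - j) * ((n : ℝ) + j + 1) ^ 2) =
      1 / ((m : ℝ) + n + 1) ^ 2 *
          (genHarmonic 1 m + (genHarmonic 1 (n + m) - genHarmonic 1 n)) +
        1 / ((m : ℝ) + n + 1) * (genHarmonic 2 (n + m) - genHarmonic 2 n) := by
  have hsplit : ∀ j ∈ range m, 1 / (((m : ℝ) - j) * ((n : ℝ) + j + 1) ^ 2) =
      1 / ((m : ℝ) + n + 1) ^ 2 * (1 / ((m : ℝ) - j) + 1 / ((n : ℝ) + j + 1) ^ 1) +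
        1 / ((m : ℝ) + n + 1) * (1 / ((n : ℝ) + j + 1) ^ 2) := by
    intro j hj
    have hjm : (j : ℝ) < m := by exact_mod_cast mem_range.mp hj
    rw [one_div_mul_sq_eq (by linarith) (by positivity) (by positivity),
      show (m : ℝ) - j + (n + j + 1) = m + n + 1 by ring, pow_one]
  rw [sum_congr rfl hsplit, sum_add_distrib, ← mul_sum, ← mul_sum, sum_add_distrib,
    ← genHarmonic_one_eq_sum_range_one_div_sub, sum_range_one_div_add_pow, sum_range_one_div_add_pow]

lemma sum_genHarmonic_div_sq_succ (m n : ℕ) :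
    ∑ j ∈ range (m + 1), genHarmonic 1 (m - j) / ((n : ℝ) + j + 1) ^ 2 =
      ∑ j ∈ range m, genHarmonic 1 (m - 1 - j) / ((n : ℝ) + j + 1) ^ 2 +
        ∑ j ∈ range m, 1 / (((m : ℝ) - j) * ((n : ℝ) + j + 1) ^ 2) := by
  rw [sum_range_succ, Nat.sub_self, genHarmonic_zero, zero_div, add_zero, ← sum_add_distrib]
  refine sum_congr rfl fun j hj => ?_
  have hj := mem_range.mp hj
  rw [show m - j = m - 1 - j + 1 by omega, genHarmonic_succ, pow_one,
    cast_sub_one_sub_add_one hj, add_div, div_div]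

lemma sum_genHarmonic_div_sq_add_sum_genHarmonic_sq_div {n : ℕ} (hn : n ≠ 0) (m : ℕ) :
    ∑ j ∈ range m, genHarmonic 1 (m - 1 - j) / ((n : ℝ) + j + 1) ^ 2 +
        ∑ k ∈ range m, genHarmonic 2 (n + k) / ((k : ℝ) + 1) =
      1 / (n : ℝ) ^ 2 * (genHarmonic 1 (n + m) - genHarmonic 1 n - genHarmonic 1 m) +
        genHarmonic 1 m * genHarmonic 2 (n + m) +
        (genHarmonic 1 (n + m) - genHarmonic 1 n) * (genHarmonic 2 (n + m) - genHarmonic 2 n) +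
        1 / (n : ℝ) * (genHarmonic 2 (n + m) - genHarmonic 2 n) +
        genHarmonic 3 n - genHarmonic 3 (n + m) := by
  induction m with
  | zero => simp
  | succ m ih =>
    have hcancel : (1 / ((m : ℝ) + n + 1) - 1 / ((m : ℝ) + 1)) / (n : ℝ) ^ 2 +
        1 / ((m : ℝ) + n + 1) ^ 2 / n + 1 / ((m : ℝ) + n + 1) ^ 2 * (1 / ((m : ℝ) + 1)) = 0 := by
      field_simp
      ring
    rw [Nat.add_sub_cancel, sum_genHarmonic_div_sq_succ, sum_range_one_div_sub_mul_sq,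
      sum_range_succ, ← add_assoc n m 1]
    simp only [genHarmonic_succ]
    push_cast
    simp only [← one_div_pow] at hcancel ⊢
    linear_combination ih - hcancel

lemma ψ₀_succ (l : ℕ) : ψ₀ (l + 1) = -Real.eulerMascheroniConstant + genHarmonic 1 l := by
  simp only [ψ₀, genHarmonic, Nat.add_sub_cancel, pow_one]

lemma ψ₁_succ (l : ℕ) : ψ₁ (l + 1) = Real.pi ^ 2 / 6 - genHarmonic 2 l := by
  rw [ψ₁, genHarmonic, Nat.add_sub_cancel]

lemma ψ₂_succ (l : ℕ) :
    ψ₂ (l + 1) = -2 * (∑' i : ℕ, (1 : ℝ) / (i + 1) ^ 3) + 2 * genHarmonic 3 l := by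
  rw [ψ₂, genHarmonic, Nat.add_sub_cancel]

lemma sum_Icc_one_eq_sum_range {M : Type*} [AddCommMonoid M] (f : ℕ → M) (m : ℕ) :
    ∑ k ∈ Icc 1 m, f k = ∑ k ∈ range m, f (k + 1) := by
  rw [range_eq_Ico, sum_Ico_add', zero_add, Ico_add_one_right_eq_Icc]

lemma sum_Icc_ψ₀_div_sq (m n : ℕ) :
    ∑ k ∈ Icc 1 m, ψ₀ k / ((m + n + 1 - k : ℕ) : ℝ) ^ 2 =
      -Real.eulerMascheroniConstant * (genHarmonic 2 (n + m) - genHarmonic 2 n) +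
        ∑ j ∈ range m, genHarmonic 1 (m - 1 - j) / ((n : ℝ) + j + 1) ^ 2 := by
  have hreflect := sum_Ico_reflect (fun k => ψ₀ k / ((m + n + 1 - k : ℕ) : ℝ) ^ 2) 0
    (Nat.le_succ m)
  simp only [Nat.add_sub_cancel_left, Nat.sub_zero, Ico_add_one_right_eq_Icc,
    ← range_eq_Ico] at hreflect
  rw [← hreflect, ← sum_range_one_div_add_pow, mul_sum, ← sum_add_distrib]
  refine sum_congr rfl fun j hj => ?_
  have hj := mem_range.mp hj
  rw [show m - j = m - 1 - j + 1 by omega, show m + n + 1 - (m - 1 - j + 1) = n + j + 1 by omega,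
    ψ₀_succ]
  push_cast
  ring

lemma sum_Icc_ψ₁_add_div (m n : ℕ) :
    ∑ k ∈ Icc 1 m, ψ₁ (k + n) / (k : ℝ) =
      Real.pi ^ 2 / 6 * genHarmonic 1 m - ∑ k ∈ range m, genHarmonic 2 (n + k) / ((k : ℝ) + 1) := by
  rw [sum_Icc_one_eq_sum_range, genHarmonic, mul_sum, ← sum_sub_distrib]
  refine sum_congr rfl fun k _ => ?_
  rw [show k + 1 + n = n + k + 1 by omega, ψ₁_succ]
  push_cast
  ring

theorem stmt5_general (m a : ℕ) (ha : m < a) :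
    ∑ k ∈ Finset.Icc 1 m, ψ₀ k / ((a + 1 - k : ℕ) : ℝ) ^ 2 =
      ∑ k ∈ Finset.Icc 1 m, ψ₁ (k + a - m) / (k : ℝ) +
        (1 / ((a : ℝ) - m) ^ 2) *
          (-ψ₀ (a - m + 1) + ψ₀ (a + 1) - ψ₀ (m + 1) + ψ₀ 1) -
        ψ₁ (a + 1) * ψ₀ (m + 1) + ψ₀ (a + 1) * (ψ₁ (a - m + 1) - ψ₁ (a + 1)) +
        (1 / ((a : ℝ) - m)) * (ψ₁ (a - m + 1) - ψ₁ (a + 1)) +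
        ψ₀ (a - m + 1) * (ψ₁ (a + 1) - ψ₁ (a - m + 1)) +
        ψ₀ 1 * ψ₁ (a - m + 1) + (1 / 2) * ψ₂ (a - m + 1) - (1 / 2) * ψ₂ (a + 1) := by
  obtain ⟨n, rfl⟩ : ∃ n, a = m + n := ⟨a - m, by omega⟩
  have hn : n ≠ 0 := by omega
  have hshift : ∀ k, k + (m + n) - m = k + n := fun k => by omega
  have hcast : ((m + n : ℕ) : ℝ) - m = n := by push_cast; ring
  simp only [hshift, Nat.add_sub_cancel_left, hcast]
  rw [sum_Icc_ψ₀_div_sq, sum_Icc_ψ₁_add_div, add_comm m n]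
  simp only [ψ₀_succ, ψ₁_succ, ψ₂_succ, genHarmonic_zero]
  linear_combination sum_genHarmonic_div_sq_add_sum_genHarmonic_sq_div hn m

theorem stmt5 (m a : ℕ) (hm : 0 < m) (ha : m < a) :
    ∑ k ∈ Finset.Icc 1 m, ψ₀ k / ((a + 1 - k : ℕ) : ℝ) ^ 2 =
      ∑ k ∈ Finset.Icc 1 m, ψ₁ (k + a - m) / (k : ℝ) +
        (1 / ((a : ℝ) - m) ^ 2) *
          (-ψ₀ (a - m + 1) + ψ₀ (a + 1) - ψ₀ (m + 1) + ψ₀ 1) -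
        ψ₁ (a + 1) * ψ₀ (m + 1) + ψ₀ (a + 1) * (ψ₁ (a - m + 1) - ψ₁ (a + 1)) +
        (1 / ((a : ℝ) - m)) * (ψ₁ (a - m + 1) - ψ₁ (a + 1)) +
        ψ₀ (a - m + 1) * (ψ₁ (a + 1) - ψ₁ (a - m + 1)) +
        ψ₀ 1 * ψ₁ (a - m + 1) + (1 / 2) * ψ₂ (a - m + 1) - (1 / 2) * ψ₂ (a + 1) :=
  stmt5_general m a ha
end
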